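/- arXiv:2004.11166 — 2 statements merged into one kernel-verified Lean document; each statement's English description precedes it below -/
import Mathlib

section
/- Let P be a GMMN instance whose intersection graph IG[P] admits a tree decomposition of width at most tw, and let N* ∈ Opt(P) be an optimal solution for P. Then every feasible solution N ∈ Feas(P) satisfies ‖N‖ ≤ (tw + 1)·‖N*‖. (Corollary B.3.) -/
/-!
Every M-path for a pair `v` stays inside the bounding box `B(v)`. Hence the pairs whose optimal
paths use a common grid edge `e` have subgrids sharing `e`: they form a clique of `IG[P]`. By the
Helly property of subtrees of a tree, a clique lies in a single bag, so `e` is used by at most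
`tw + 1` optimal paths. A feasible network is at most as long as the sum `∑ d(v)` of its paths'
lengths, which is also the sum of the optimal paths' lengths, i.e. at most `(tw + 1) ‖N*‖`.
-/

noncomputable section
open scoped Classical

/-- A point in the Euclidean plane. -/
abbrev Point : Type := ℝ × ℝ

/-- The Manhattan distance `d(p, q)`. -/
def manh (p q : Point) : ℝ := |p.1 - q.1| + |p.2 - q.2|

/-- The Euclidean length `‖pq‖` of the segment between `p` and `q`. -/
def euclen (p q : Point) : ℝ := Real.sqrt ((p.1 - q.1) ^ 2 + (p.2 - q.2) ^ 2)

/-- The segment `pq` is axis-aligned. -/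
def axisAligned (p q : Point) : Prop := p.1 = q.1 ∨ p.2 = q.2

/-- `z` lies in the bounding box `B(a, b)` (componentwise between `a ⊓ b` and `a ⊔ b`). -/
def inBox (a b z : Point) : Prop := a ⊓ b ≤ z ∧ z ≤ a ⊔ b

lemma euclen_comm (p q : Point) : euclen p q = euclen q p := by
  unfold euclen; ring_nf

/-- Length of an (unordered) edge. -/
def sym2Len : Sym2 Point → ℝ := Sym2.lift ⟨euclen, euclen_comm⟩

/-- The length of a network, given by its (finite) edge set. -/
def netLength (N : Finset (Sym2 Point)) : ℝ := ∑ e ∈ N, sym2Len e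

/-- A (simple) path in the plane, given by its sequence of (distinct) vertices. -/
structure GPath where
  k : ℕ
  pts : Fin (k + 1) → Point
  inj : Function.Injective pts

/-- The `i`-th edge of a path. -/
def GPath.edge (π : GPath) (i : Fin π.k) : Sym2 Point :=
  s(π.pts i.castSucc, π.pts i.succ)

/-- The edge set of a path. -/
def GPath.edges (π : GPath) : Finset (Sym2 Point) :=
  Finset.image π.edge Finset.univ

/-- The total (Euclidean) length of a path. -/
def GPath.length (π : GPath) : ℝ :=
  ∑ i : Fin π.k, euclen (π.pts i.castSucc) (π.pts i.succ)

/-- `π` is a Manhattan path (M-path) for the pair `(s, t)`: an `s`–`t` path all of whose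
edges are axis-aligned and whose total length equals the Manhattan distance `d(s, t)`. -/
def IsMPath (s t : Point) (π : GPath) : Prop :=
  π.pts 0 = s ∧ π.pts (Fin.last π.k) = t ∧
  (∀ i : Fin π.k, axisAligned (π.pts i.castSucc) (π.pts i.succ)) ∧
  π.length = manh s t

/-- A GMMN instance: a finite set of pairs of points. -/
abbrev Inst : Type := Finset (Point × Point)

/-- The vertex set of the Hanan grid `H(P)`. -/
def hananV (P : Inst) : Finset Point :=
  ((P.image fun v => v.1.1) ∪ (P.image fun v => v.2.1)) ×ˢ
  ((P.image fun v => v.1.2) ∪ (P.image fun v => v.2.2))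

/-- `{p, q}` is an edge of the Hanan grid `H(P)`: an axis-aligned segment between two distinct
grid vertices containing no third grid vertex. -/
def IsHananEdge (P : Inst) (p q : Point) : Prop :=
  p ∈ hananV P ∧ q ∈ hananV P ∧ p ≠ q ∧ axisAligned p q ∧
  ∀ z ∈ hananV P, inBox p q z → z = p ∨ z = q

/-- All edges of the path `π` are edges of the Hanan grid `H(P)`. -/
def OnGrid (P : Inst) (π : GPath) : Prop :=
  ∀ i : Fin π.k, IsHananEdge P (π.pts i.castSucc) (π.pts i.succ)

/-- `π ∈ Π_P(u)`: an M-path for the pair `u` that is a subgraph of the Hanan grid `H(P)`. -/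
def InPi (P : Inst) (u : Point × Point) (π : GPath) : Prop :=
  IsMPath u.1 u.2 π ∧ OnGrid P π

/-- The network `∪_{v ∈ P} π_v` determined by a choice of M-paths. -/
def netOf (P : Inst) (f : Point × Point → GPath) : Finset (Sym2 Point) :=
  P.biUnion fun v => (f v).edges

/-- `f` gives a feasible solution in `Feas(P)`: an M-path on the Hanan grid for each pair. -/
def IsFeasChoice (P : Inst) (f : Point × Point → GPath) : Prop :=
  ∀ v ∈ P, InPi P v (f v)

/-- `f` gives an optimal solution in `Opt(P)`. -/
def IsOptChoice (P : Inst) (f : Point × Point → GPath) : Prop :=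
  IsFeasChoice P f ∧
  ∀ g : Point × Point → GPath, IsFeasChoice P g →
    netLength (netOf P f) ≤ netLength (netOf P g)

/-- Adjacency in the intersection graph `IG[P]`: `u ≠ v` and the induced subgrids
`H(P, u)` and `H(P, v)` share an edge. -/
def IGAdj (P : Inst) (u v : Point × Point) : Prop :=
  u ≠ v ∧ ∃ p q : Point, IsHananEdge P p q ∧
    inBox u.1 u.2 p ∧ inBox u.1 u.2 q ∧ inBox v.1 v.2 p ∧ inBox v.1 v.2 q

/-- The total length `‖π₁ ∩ π₂‖` of the segments shared by two paths. -/
def sharedLen (π₁ π₂ : GPath) : ℝ := netLength (π₁.edges ∩ π₂.edges)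

/-- A pair `(p, q)` with `p_x ≤ q_x` is regular if `p_y ≤ q_y`. -/
def Regular (u : Point × Point) : Prop := u.1.1 ≤ u.2.1 ∧ u.1.2 ≤ u.2.2

/-- A pair `(p, q)` with `p_x ≤ q_x` is flipped if `p_y ≥ q_y`. -/
def Flipped (u : Point × Point) : Prop := u.1.1 ≤ u.2.1 ∧ u.2.2 ≤ u.1.2

/-- The intersection graph `IG[P]` as a simple graph on the pairs of `P`. -/
def IG (P : Inst) : SimpleGraph {v : Point × Point // v ∈ P} where
  Adj u v := IGAdj P u.1 v.1
  symm := ⟨by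
    rintro u v ⟨hne, p, q, he, h1, h2, h3, h4⟩
    exact ⟨hne.symm, p, q, he, h3, h4, h1, h2⟩⟩
  loopless := ⟨fun u h => h.1 rfl⟩

lemma mem_uIcc_of_abs_sub_add_abs_sub_le {a b c : ℝ} (h : |a - b| + |b - c| ≤ |a - c|) :
    b ∈ Set.uIcc a c := by
  rw [Set.mem_uIcc]
  rcases abs_cases (a - b) with ⟨h₁, h₁'⟩ | ⟨h₁, h₁'⟩ <;>
  rcases abs_cases (b - c) with ⟨h₂, h₂'⟩ | ⟨h₂, h₂'⟩ <;>
  rcases abs_cases (a - c) with ⟨h₃, h₃'⟩ | ⟨h₃, h₃'⟩ <;>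
  first | (left; constructor <;> linarith) | (right; constructor <;> linarith)

lemma mem_uIcc_of_sum_abs_sub_le {x : ℕ → ℝ} {j k : ℕ} (hjk : j ≤ k)
    (h : ∑ i ∈ Finset.range k, |x i - x (i + 1)| ≤ |x 0 - x k|) :
    x j ∈ Set.uIcc (x 0) (x k) := by
  apply mem_uIcc_of_abs_sub_add_abs_sub_le
  have h₁ := dist_le_range_sum_dist x j
  have h₂ := dist_le_Ico_sum_dist x hjk
  rw [← Finset.sum_range_add_sum_Ico _ hjk] at h
  simp only [Real.dist_eq] at h₁ h₂
  linarith

lemma inBox_iff {s t z : Point} :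
    inBox s t z ↔ z.1 ∈ Set.uIcc s.1 t.1 ∧ z.2 ∈ Set.uIcc s.2 t.2 := by
  simp only [inBox, Set.uIcc, Set.mem_Icc, Prod.le_def, Prod.fst_inf, Prod.snd_inf,
    Prod.fst_sup, Prod.snd_sup]
  tauto

lemma euclen_eq_manh {p q : Point} (h : axisAligned p q) : euclen p q = manh p q := by
  rcases h with h | h <;> simp [euclen, manh, h, Real.sqrt_sq_eq_abs]

lemma sym2Len_nonneg (e : Sym2 Point) : 0 ≤ sym2Len e := by
  induction e using Sym2.ind with
  | _ p q => exact Real.sqrt_nonneg _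

namespace GPath

def vtx (π : GPath) (n : ℕ) : Point := π.pts (Fin.clamp n π.k)

lemma vtx_val (π : GPath) (j : Fin (π.k + 1)) : π.vtx j = π.pts j := by
  rw [vtx]
  congr
  exact Fin.ext (min_eq_left (Nat.lt_succ_iff.1 j.isLt))

lemma sum_fin_eq_sum_range (π : GPath) (F : Point → Point → ℝ) :
    ∑ i : Fin π.k, F (π.pts i.castSucc) (π.pts i.succ) =
      ∑ i ∈ Finset.range π.k, F (π.vtx i) (π.vtx (i + 1)) := by
  rw [← Fin.sum_univ_eq_sum_range (fun i => F (π.vtx i) (π.vtx (i + 1)))]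
  refine Finset.sum_congr rfl fun i _ => ?_
  rw [← vtx_val, ← vtx_val]
  rfl

lemma edge_injective (π : GPath) : Function.Injective π.edge := by
  intro i j h
  rcases Sym2.eq_iff.1 h with ⟨h₁, -⟩ | ⟨h₁, h₂⟩
  · exact Fin.castSucc_injective _ (π.inj h₁)
  · have e₁ := congrArg Fin.val (π.inj h₁)
    have e₂ := congrArg Fin.val (π.inj h₂)
    simp only [Fin.val_castSucc, Fin.val_succ] at e₁ e₂
    omega

lemma netLength_edges (π : GPath) : netLength π.edges = π.length := by
  rw [netLength, edges, Finset.sum_image fun _ _ _ _ h => π.edge_injective h]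
  rfl

end GPath

/-- The length of an M-path is the sum of the total variations of its two coordinates, each at
least the corresponding difference of the endpoints; equality forces both to be monotone. -/
theorem IsMPath.inBox_pts {s t : Point} {π : GPath} (h : IsMPath s t π) (j : Fin (π.k + 1)) :
    inBox s t (π.pts j) := by
  obtain ⟨h₀, hk, haxis, hlen⟩ := h
  have hs : π.vtx 0 = s := by rw [← h₀, ← π.vtx_val 0]; rfl
  have ht : π.vtx π.k = t := by rw [← hk, ← π.vtx_val (Fin.last π.k)]; rfl
  have hvar : π.length = ∑ i ∈ Finset.range π.k, |(π.vtx i).1 - (π.vtx (i + 1)).1| +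
      ∑ i ∈ Finset.range π.k, |(π.vtx i).2 - (π.vtx (i + 1)).2| := by
    calc π.length = ∑ i : Fin π.k, manh (π.pts i.castSucc) (π.pts i.succ) :=
          Finset.sum_congr rfl fun i _ => euclen_eq_manh (haxis i)
      _ = _ := π.sum_fin_eq_sum_range manh
      _ = _ := by simp only [manh, Finset.sum_add_distrib]
  have hx := dist_le_range_sum_dist (fun n => (π.vtx n).1) π.k
  have hy := dist_le_range_sum_dist (fun n => (π.vtx n).2) π.k
  simp only [Real.dist_eq] at hx hy
  rw [hlen, manh, ← hs, ← ht] at hvar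
  rw [inBox_iff, ← π.vtx_val, ← hs, ← ht]
  exact ⟨mem_uIcc_of_sum_abs_sub_le (x := fun n => (π.vtx n).1) j.is_le (by linarith),
    mem_uIcc_of_sum_abs_sub_le (x := fun n => (π.vtx n).2) j.is_le (by linarith)⟩

namespace SimpleGraph

variable {ι α : Type*} {G T : SimpleGraph ι}

theorem Walk.IsPath.append {u v w : ι} {p : G.Walk u v} {q : G.Walk v w}
    (hp : p.IsPath) (hq : q.IsPath) (h : ∀ x ∈ p.support, x ∈ q.support → x = v) :
    (p.append q).IsPath := by
  rw [Walk.isPath_def, Walk.support_append, List.nodup_append]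
  refine ⟨hp.support_nodup, hq.support_nodup.tail, ?_⟩
  rintro x hxp _ hxq rfl
  obtain rfl := h x hxp (List.mem_of_mem_tail hxq)
  have hnodup := hq.support_nodup
  rw [← q.cons_tail_support, List.nodup_cons] at hnodup
  exact hnodup.1 hxq

namespace IsTree

theorem support_subset_of_connected (hT : T.IsTree) {A : Set ι}
    (hA : (T.induce A).Connected) {a b : ι} (ha : a ∈ A) (hb : b ∈ A) {p : T.Walk a b}
    (hp : p.IsPath) : ∀ v ∈ p.support, v ∈ A := by
  classical
  obtain ⟨w, hw⟩ := ((Subgraph.connected_iff_forall_exists_walk_subgraph _).1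
    (connected_induce_iff.1 hA)).2 ha hb
  obtain rfl : p = w.bypass := (hT.existsUnique_path a b).unique hp w.bypass_isPath
  intro v hv
  exact hw.1 (by simpa using w.support_bypass_subset_support hv)

theorem connected_induce_inter (hT : T.IsTree) {A B : Set ι}
    (hA : (T.induce A).Connected) (hB : (T.induce B).Connected) (hAB : (A ∩ B).Nonempty) :
    (T.induce (A ∩ B)).Connected := by
  obtain ⟨u, hu⟩ := hAB
  refine induce_connected_of_patches u hu fun {v} hv => ?_
  obtain ⟨p, hp, -⟩ := hT.existsUnique_path u v
  exact ⟨{w | w ∈ p.support},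
    fun w hw => ⟨hT.support_subset_of_connected hA hu.1 hv.1 hp w hw,
      hT.support_subset_of_connected hB hu.2 hv.2 hp w hw⟩,
    p.start_mem_support, p.end_mem_support, p.connected_induce_support _ _⟩

/-- The common vertex is the median of `a ∈ A ∩ B`, `b ∈ A ∩ C` and `c ∈ B ∩ C`: the first vertex
of the path from `a` to `b` that lies on the path from `c` to `b`. -/
theorem inter_inter_nonempty (hT : T.IsTree) {A B C : Set ι}
    (hA : (T.induce A).Connected) (hB : (T.induce B).Connected) (hC : (T.induce C).Connected)
    (hAB : (A ∩ B).Nonempty) (hAC : (A ∩ C).Nonempty) (hBC : (B ∩ C).Nonempty) :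
    (A ∩ B ∩ C).Nonempty := by
  classical
  obtain ⟨a, haA, haB⟩ := hAB
  obtain ⟨b, hbA, hbC⟩ := hAC
  obtain ⟨c, hcB, hcC⟩ := hBC
  obtain ⟨p, hp, -⟩ := hT.existsUnique_path a b
  obtain ⟨q, hq, -⟩ := hT.existsUnique_path c b
  obtain ⟨x, hxq, hxp, hfirst⟩ :=
    p.exists_mem_support_forall_mem_support_imp_eq q.support.toFinset ⟨b, by simp⟩
  rw [List.mem_toFinset] at hxq
  have hmedian : ((p.takeUntil x hxp).append (q.takeUntil x hxq).reverse).IsPath :=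
    (hp.takeUntil hxp).append (hq.takeUntil hxq).reverse fun y hyp hyq => hfirst y
      (List.mem_toFinset.2 (q.support_takeUntil_subset_support hxq (by simpa using hyq))) hyp
  refine ⟨x, ⟨hT.support_subset_of_connected hA haA hbA hp x hxp,
    hT.support_subset_of_connected hB haB hcB hmedian x (by simp)⟩,
    hT.support_subset_of_connected hC hcC hbC hq x hxq⟩

theorem exists_mem_of_pairwise_inter_nonempty (hT : T.IsTree) {s : Finset α} {S : α → Set ι}
    (hS : ∀ a ∈ s, (T.induce (S a)).Connected)
    (hpair : ∀ a ∈ s, ∀ b ∈ s, (S a ∩ S b).Nonempty) :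
    ∃ t, ∀ a ∈ s, t ∈ S a := by
  classical
  -- strengthened so that the induction can cut the current subtree `C` down by each new member
  suffices key : ∀ C : Set ι, (T.induce C).Connected → (∀ a ∈ s, (C ∩ S a).Nonempty) →
      ∃ t ∈ C, ∀ a ∈ s, t ∈ S a by
    obtain ⟨t, -, ht⟩ := key Set.univ ((induceUnivIso T).connected_iff.2 hT.connected)
      fun a ha => by simpa using Set.nonempty_coe_sort.1 (hS a ha).nonempty
    exact ⟨t, ht⟩
  induction s using Finset.induction_on with
  | empty => exact fun C hC _ => ⟨hC.nonempty.some, hC.nonempty.some.2, by simp⟩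
  | insert a s _ ih =>
    simp only [Finset.forall_mem_insert] at hS hpair ⊢
    intro C hC ⟨hCa, hCs⟩
    obtain ⟨t, ⟨htC, hta⟩, hts⟩ := ih hS.2 (fun b hb => (hpair.2 b hb).2)
      (C ∩ S a) (hT.connected_induce_inter hC hS.1 hCa)
      fun b hb => hT.inter_inter_nonempty hC hS.1 (hS.2 b hb) hCa (hCs b hb) (hpair.1.2 b hb)
    exact ⟨t, htC, hta, hts⟩

theorem exists_subset_bag (hT : T.IsTree) (X : ι → Finset α) {K : Finset α}
    (hconn : ∀ v ∈ K, (T.induce {t | v ∈ X t}).Connected)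
    (hcover : ∀ u ∈ K, ∀ v ∈ K, u ≠ v → ∃ t, u ∈ X t ∧ v ∈ X t) :
    ∃ t, K ⊆ X t := by
  obtain ⟨t, ht⟩ := hT.exists_mem_of_pairwise_inter_nonempty hconn fun u hu v hv => by
    obtain rfl | huv := eq_or_ne u v
    · simpa using Set.nonempty_coe_sort.1 (hconn u hu).nonempty
    · obtain ⟨t, htu, htv⟩ := hcover u hu v hv huv
      exact ⟨t, htu, htv⟩
  exact ⟨t, ht⟩

end IsTree

end SimpleGraph

lemma IsMPath.inBox_of_mem_edges {s t p q : Point} {π : GPath} (h : IsMPath s t π)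
    (he : s(p, q) ∈ π.edges) : inBox s t p ∧ inBox s t q := by
  obtain ⟨i, -, hi⟩ := Finset.mem_image.1 he
  rcases Sym2.eq_iff.1 hi with ⟨rfl, rfl⟩ | ⟨rfl, rfl⟩
  exacts [⟨h.inBox_pts _, h.inBox_pts _⟩, ⟨h.inBox_pts _, h.inBox_pts _⟩]

lemma igAdj_of_mem_edges {P : Inst} {u v : Point × Point} {π σ : GPath} (hπ : InPi P u π)
    (hσ : InPi P v σ) (huv : u ≠ v) {e : Sym2 Point} (heπ : e ∈ π.edges) (heσ : e ∈ σ.edges) :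
    IGAdj P u v := by
  obtain ⟨i, -, rfl⟩ := Finset.mem_image.1 heπ
  obtain ⟨hp, hq⟩ := hσ.1.inBox_of_mem_edges heσ
  exact ⟨huv, _, _, hπ.2 i, hπ.1.inBox_pts _, hπ.1.inBox_pts _, hp, hq⟩

lemma Finset.sum_sum_eq_sum_biUnion_card_nsmul {α β M : Type*} [DecidableEq β]
    [AddCommMonoid M] (s : Finset α) (E : α → Finset β) (w : β → M) :
    ∑ a ∈ s, ∑ b ∈ E a, w b = ∑ b ∈ s.biUnion E, (s.filter fun a => b ∈ E a).card • w b := by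
  rw [Finset.sum_comm' (t' := s.biUnion E) (s' := fun b => s.filter fun a => b ∈ E a)]
  · simp only [Finset.sum_const]
  · intro a b
    simp only [Finset.mem_filter, Finset.mem_biUnion]
    exact ⟨fun h => ⟨h, a, h⟩, fun h => h.1⟩

lemma sum_length_eq_sum_card_mul (P : Inst) (f : Point × Point → GPath) :
    ∑ v ∈ P, (f v).length =
      ∑ e ∈ netOf P f, ((P.filter fun v => e ∈ (f v).edges).card : ℝ) * sym2Len e := by
  simp only [← GPath.netLength_edges, netLength, ← nsmul_eq_mul]
  exact Finset.sum_sum_eq_sum_biUnion_card_nsmul P (fun v => (f v).edges) sym2Len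

lemma netLength_netOf_le_sum_length (P : Inst) (f : Point × Point → GPath) :
    netLength (netOf P f) ≤ ∑ v ∈ P, (f v).length := by
  rw [sum_length_eq_sum_card_mul, netLength]
  refine Finset.sum_le_sum fun e he => le_mul_of_one_le_left (sym2Len_nonneg e) ?_
  obtain ⟨v, hv, hev⟩ := Finset.mem_biUnion.1 he
  exact_mod_cast Finset.card_pos.2 ⟨v, Finset.mem_filter.2 ⟨hv, hev⟩⟩

lemma sum_length_le_mul_netLength (P : Inst) (f : Point × Point → GPath) {m : ℕ}
    (hm : ∀ e ∈ netOf P f, (P.filter fun v => e ∈ (f v).edges).card ≤ m) :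
    ∑ v ∈ P, (f v).length ≤ m * netLength (netOf P f) := by
  rw [sum_length_eq_sum_card_mul, netLength, Finset.mul_sum]
  exact Finset.sum_le_sum fun e he =>
    mul_le_mul_of_nonneg_right (by exact_mod_cast hm e he) (sym2Len_nonneg e)

theorem treewidth_approximation_general (P : Inst) (tw : ℕ)
    (ι : Type) (T : SimpleGraph ι) (hT : T.IsTree)
    (X : ι → Finset (Point × Point))
    (hwidth : ∀ t : ι, (X t).card ≤ tw + 1)
    (hT2 : ∀ u ∈ P, ∀ v ∈ P, IGAdj P u v → ∃ t : ι, u ∈ X t ∧ v ∈ X t)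
    (hT3 : ∀ v ∈ P, (T.induce {t : ι | v ∈ X t}).Connected)
    (f g : Point × Point → GPath) (hf : IsOptChoice P f) (hg : IsFeasChoice P g) :
    netLength (netOf P g) ≤ ((tw : ℝ) + 1) * netLength (netOf P f) := by
  have hmult : ∀ e ∈ netOf P f, (P.filter fun v => e ∈ (f v).edges).card ≤ tw + 1 := by
    intro e _
    obtain ⟨t, ht⟩ := hT.exists_subset_bag X (K := P.filter fun v => e ∈ (f v).edges)
      (fun v hv => hT3 v (Finset.mem_filter.1 hv).1)
      fun u hu v hv huv => by
        rw [Finset.mem_filter] at hu hv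
        exact hT2 u hu.1 v hv.1 (igAdj_of_mem_edges (hf.1 u hu.1) (hf.1 v hv.1) huv hu.2 hv.2)
    exact (Finset.card_le_card ht).trans (hwidth t)
  calc netLength (netOf P g) ≤ ∑ v ∈ P, (g v).length := netLength_netOf_le_sum_length P g
    _ = ∑ v ∈ P, (f v).length := Finset.sum_congr rfl fun v hv => by
        rw [(hg v hv).1.2.2.2, (hf.1 v hv).1.2.2.2]
    _ ≤ ((tw + 1 : ℕ) : ℝ) * netLength (netOf P f) := sum_length_le_mul_netLength P f hmult
    _ = ((tw : ℝ) + 1) * netLength (netOf P f) := by push_cast; rfl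

/-- Corollary B.3: if the intersection graph `IG[P]` admits a tree decomposition of width at
most `tw`, then every feasible solution has length at most `(tw + 1)` times the length of an
optimal solution. -/
theorem treewidth_approximation (P : Inst) (tw : ℕ)
    (ι : Type) [Fintype ι] (T : SimpleGraph ι) (hT : T.IsTree)
    (X : ι → Finset (Point × Point))
    (hbag : ∀ t : ι, X t ⊆ P)
    (hwidth : ∀ t : ι, (X t).card ≤ tw + 1)
    (hT1 : ∀ v ∈ P, ∃ t : ι, v ∈ X t)
    (hT2 : ∀ u ∈ P, ∀ v ∈ P, IGAdj P u v → ∃ t : ι, u ∈ X t ∧ v ∈ X t)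
    (hT3 : ∀ v ∈ P, (T.induce {t : ι | v ∈ X t}).Connected)
    (f g : Point × Point → GPath) (hf : IsOptChoice P f) (hg : IsFeasChoice P g) :
    netLength (netOf P g) ≤ ((tw : ℝ) + 1) * netLength (netOf P f) :=
  treewidth_approximation_general P tw ι T hT X hwidth hT2 hT3 f g hf hg

end
end

section
/- Let P be a GMMN instance, let l = (s_l, t_l) ∈ P be a flipped pair, and let p and q be vertices of the Hanan grid H(P) lying in B(l) with p ≤ q, p_x < q_x and p_y < q_y. Then no Manhattan path π_l ∈ Π_P(l) contains both a horizontal edge and a vertical edge of any single Manhattan path π_v ∈ Π_P(p,q). (This is the key upper-bound step in the proof of Lemma 3.1(2).) -/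
noncomputable section
open scoped Classical

/-! Along an M-path of a regular pair both coordinates are monotone, so any two of its vertices
are comparable for `≤`; along an M-path of the flipped pair `l` the x-coordinate increases while
the y-coordinate decreases, so any two of its vertices form a flipped pair. Hence any two vertices
common to `πv` and `πl` agree in one coordinate. The endpoints of a shared horizontal edge and of
a shared vertical edge would be four such vertices, which is impossible. -/

theorem Fin.sum_succ_sub_castSucc {G : Type*} [AddCommGroup G] :
    ∀ {n : ℕ} (f : Fin (n + 1) → G),
      ∑ i : Fin n, (f i.succ - f i.castSucc) = f (Fin.last n) - f 0
  | 0, f => by simp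
  | n + 1, f => by
    rw [Fin.sum_univ_castSucc]
    simp only [Fin.succ_castSucc]
    rw [Fin.sum_succ_sub_castSucc (fun i => f i.castSucc)]
    simp only [Fin.succ_last, Fin.castSucc_zero]
    abel

theorem Fin.monotone_of_sum_abs_sub_le {n : ℕ} {f : Fin (n + 1) → ℝ}
    (h : ∑ i : Fin n, |f i.succ - f i.castSucc| ≤ f (Fin.last n) - f 0) : Monotone f := by
  rw [← Fin.sum_succ_sub_castSucc, ← sub_nonpos, ← Finset.sum_sub_distrib] at h
  refine Fin.monotone_iff_le_succ.mpr fun i => ?_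
  have hi : |f i.succ - f i.castSucc| - (f i.succ - f i.castSucc) ≤ 0 :=
    (Finset.single_le_sum (fun j _ => sub_nonneg.mpr (le_abs_self _)) (Finset.mem_univ i)).trans h
  linarith [abs_nonneg (f i.succ - f i.castSucc)]

theorem Fin.antitone_of_sum_abs_sub_le {n : ℕ} {f : Fin (n + 1) → ℝ}
    (h : ∑ i : Fin n, |f i.succ - f i.castSucc| ≤ f 0 - f (Fin.last n)) : Antitone f := by
  have hneg : Monotone (-f) := Fin.monotone_of_sum_abs_sub_le <| by
    simpa only [Pi.neg_apply, neg_sub_neg, abs_sub_comm, sub_neg_eq_add, neg_add_eq_sub] using h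
  simpa using hneg.neg

theorem euclen_eq_manh_of_axisAligned {a b : Point} (h : axisAligned a b) :
    euclen a b = manh a b := by
  unfold euclen manh
  rcases h with h | h <;> simp [h, Real.sqrt_sq_eq_abs]

namespace IsMPath

variable {s t : Point} {π : GPath}

theorem length_eq_sum_abs (h : IsMPath s t π) :
    π.length = ∑ i : Fin π.k, |(π.pts i.succ).1 - (π.pts i.castSucc).1| +
      ∑ i : Fin π.k, |(π.pts i.succ).2 - (π.pts i.castSucc).2| := by
  rw [← Finset.sum_add_distrib]
  refine Finset.sum_congr rfl fun i _ => ?_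
  rw [euclen_eq_manh_of_axisAligned (h.2.2.1 i), manh, abs_sub_comm,
    abs_sub_comm (π.pts i.castSucc).2]

/-- Each coordinate attains the triangle inequality, since the two together attain it. -/
theorem sum_abs_sub_le (h : IsMPath s t π) :
    ∑ i : Fin π.k, |(π.pts i.succ).1 - (π.pts i.castSucc).1| ≤ |t.1 - s.1| ∧
      ∑ i : Fin π.k, |(π.pts i.succ).2 - (π.pts i.castSucc).2| ≤ |t.2 - s.2| := by
  have tri (g : Point → ℝ) :
      |g t - g s| ≤ ∑ i : Fin π.k, |g (π.pts i.succ) - g (π.pts i.castSucc)| := by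
    rw [← h.1, ← h.2.1, ← Fin.sum_succ_sub_castSucc (fun i => g (π.pts i))]
    exact Finset.abs_sum_le_sum_abs _ _
  have hlen := h.2.2.2
  rw [h.length_eq_sum_abs, manh, abs_sub_comm s.1, abs_sub_comm s.2] at hlen
  constructor <;> linarith [tri Prod.fst, tri Prod.snd]

theorem monotone_fst (h : IsMPath s t π) (hst : s.1 ≤ t.1) : Monotone fun i => (π.pts i).1 :=
  Fin.monotone_of_sum_abs_sub_le <| by
    simpa only [h.1, h.2.1, abs_of_nonneg (sub_nonneg.mpr hst)] using h.sum_abs_sub_le.1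

theorem monotone_snd (h : IsMPath s t π) (hst : s.2 ≤ t.2) : Monotone fun i => (π.pts i).2 :=
  Fin.monotone_of_sum_abs_sub_le <| by
    simpa only [h.1, h.2.1, abs_of_nonneg (sub_nonneg.mpr hst)] using h.sum_abs_sub_le.2

theorem antitone_snd (h : IsMPath s t π) (hst : t.2 ≤ s.2) : Antitone fun i => (π.pts i).2 :=
  Fin.antitone_of_sum_abs_sub_le <| by
    simpa only [h.1, h.2.1, abs_of_nonpos (sub_nonpos.mpr hst), neg_sub] using h.sum_abs_sub_le.2

theorem isChain_le (h : IsMPath s t π) (hst : s ≤ t) : IsChain (· ≤ ·) (Set.range π.pts) :=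
  Monotone.isChain_range fun _ _ hij => ⟨h.monotone_fst hst.1 hij, h.monotone_snd hst.2 hij⟩

theorem isChain_flipped (h : IsMPath s t π) (hst : Flipped (s, t)) :
    IsChain (fun x y => Flipped (x, y)) (Set.range π.pts) := by
  rintro _ ⟨i, rfl⟩ _ ⟨j, rfl⟩ -
  rcases le_total i j with hij | hij
  · exact .inl ⟨h.monotone_fst hst.1 hij, h.antitone_snd hst.2 hij⟩
  · exact .inr ⟨h.monotone_fst hst.1 hij, h.antitone_snd hst.2 hij⟩

end IsMPath

namespace GPath

theorem mem_range_of_mem_edges {π : GPath} {e : Sym2 Point} (he : e ∈ π.edges) {x : Point}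
    (hx : x ∈ e) : x ∈ Set.range π.pts := by
  obtain ⟨i, -, rfl⟩ := Finset.mem_image.mp he
  rcases Sym2.mem_iff.mp hx with rfl | rfl
  exacts [⟨_, rfl⟩, ⟨_, rfl⟩]

theorem not_isDiag_of_mem_edges {π : GPath} {e : Sym2 Point} (he : e ∈ π.edges) :
    ¬ e.IsDiag := by
  obtain ⟨i, -, rfl⟩ := Finset.mem_image.mp he
  rw [GPath.edge, Sym2.mk_isDiag_iff]
  exact π.inj.ne Fin.castSucc_lt_succ.ne

end GPath

theorem fst_eq_or_snd_eq_of_isChain {S : Set Point} (hle : IsChain (· ≤ ·) S)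
    (hfl : IsChain (fun x y => Flipped (x, y)) S) {x y : Point} (hx : x ∈ S) (hy : y ∈ S) :
    x.1 = y.1 ∨ x.2 = y.2 := by
  rcases eq_or_ne x y with rfl | hne
  · exact .inl rfl
  rcases hle hx hy hne with h | h <;> rcases hfl hx hy hne with h' | h'
  all_goals first
    | exact .inl (le_antisymm h.1 h'.1)
    | exact .inl (le_antisymm h'.1 h.1)
    | exact .inr (le_antisymm h.2 h'.2)
    | exact .inr (le_antisymm h'.2 h.2)

theorem false_of_horizontal_of_vertical {S : Set Point}
    (hS : ∀ x ∈ S, ∀ y ∈ S, x.1 = y.1 ∨ x.2 = y.2) {a b c d : Point}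
    (ha : a ∈ S) (hb : b ∈ S) (hc : c ∈ S) (hd : d ∈ S)
    (hab : a.2 = b.2) (hab' : a ≠ b) (hcd : c.1 = d.1) (hcd' : c ≠ d) : False := by
  have hab₁ : a.1 ≠ b.1 := fun h => hab' (Prod.ext h hab)
  have hcd₂ : c.2 ≠ d.2 := fun h => hcd' (Prod.ext hcd h)
  by_cases hac : a.1 = c.1
  · have hbc : b.2 = c.2 := (hS b hb c hc).resolve_left fun h => hab₁ (hac.trans h.symm)
    have hbd : b.2 = d.2 :=
      (hS b hb d hd).resolve_left fun h => hab₁ (hac.trans (hcd.trans h.symm))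
    exact hcd₂ (hbc.symm.trans hbd)
  · have hac₂ : a.2 = c.2 := (hS a ha c hc).resolve_left hac
    have had₂ : a.2 = d.2 := (hS a ha d hd).resolve_left fun h => hac (h.trans hcd.symm)
    exact hcd₂ (hac₂.symm.trans had₂)

theorem flipped_no_both_directions_general (P : Inst) (l : Point × Point)
    (hfl : Flipped l) (p q : Point)
    (hx : p.1 < q.1) (hy : p.2 < q.2)
    (πl πv : GPath) (hπl : InPi P l πl) (hπv : InPi P (p, q) πv) :
    ¬ ∃ e₁ e₂ : Sym2 Point,
        e₁ ∈ πv.edges ∧ e₁ ∈ πl.edges ∧ e₂ ∈ πv.edges ∧ e₂ ∈ πl.edges ∧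
        (∃ z w : Point, e₁ = s(z, w) ∧ z.2 = w.2) ∧
        (∃ z w : Point, e₂ = s(z, w) ∧ z.1 = w.1) := by
  rintro ⟨e₁, e₂, hv₁, hl₁, hv₂, hl₂, ⟨a, b, rfl, hab⟩, ⟨c, d, rfl, hcd⟩⟩
  set S := Set.range πv.pts ∩ Set.range πl.pts
  have hS : ∀ x ∈ S, ∀ y ∈ S, x.1 = y.1 ∨ x.2 = y.2 := fun x hxS y hyS =>
    fst_eq_or_snd_eq_of_isChain ((hπv.1.isChain_le ⟨hx.le, hy.le⟩).mono Set.inter_subset_left)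
      ((hπl.1.isChain_flipped hfl).mono Set.inter_subset_right) hxS hyS
  have common {e : Sym2 Point} (hv : e ∈ πv.edges) (hl : e ∈ πl.edges) {x : Point}
      (h : x ∈ e) : x ∈ S :=
    ⟨GPath.mem_range_of_mem_edges hv h, GPath.mem_range_of_mem_edges hl h⟩
  exact false_of_horizontal_of_vertical hS
    (common hv₁ hl₁ (Sym2.mem_mk_left a b)) (common hv₁ hl₁ (Sym2.mem_mk_right a b))
    (common hv₂ hl₂ (Sym2.mem_mk_left c d)) (common hv₂ hl₂ (Sym2.mem_mk_right c d))
    hab (Sym2.mk_isDiag_iff.not.mp (GPath.not_isDiag_of_mem_edges hv₁)) hcd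
    (Sym2.mk_isDiag_iff.not.mp (GPath.not_isDiag_of_mem_edges hv₂))

/-- Key step of Lemma 3.1(2): for a flipped pair `l ∈ P` and grid vertices `p ≤ q` in `B(l)`
with `p_x < q_x` and `p_y < q_y`, no M-path for `l` contains both a horizontal edge and a
vertical edge of a single M-path for `(p, q)`. -/
theorem flipped_no_both_directions (P : Inst) (l : Point × Point) (hl : l ∈ P)
    (hfl : Flipped l) (p q : Point)
    (hp : p ∈ hananV P) (hq : q ∈ hananV P)
    (hpB : inBox l.1 l.2 p) (hqB : inBox l.1 l.2 q)
    (hx : p.1 < q.1) (hy : p.2 < q.2)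
    (πl πv : GPath) (hπl : InPi P l πl) (hπv : InPi P (p, q) πv) :
    ¬ ∃ e₁ e₂ : Sym2 Point,
        e₁ ∈ πv.edges ∧ e₁ ∈ πl.edges ∧ e₂ ∈ πv.edges ∧ e₂ ∈ πl.edges ∧
        (∃ z w : Point, e₁ = s(z, w) ∧ z.2 = w.2) ∧
        (∃ z w : Point, e₂ = s(z, w) ∧ z.1 = w.1) :=
  flipped_no_both_directions_general P l hfl p q hx hy πl πv hπl hπv

end
end
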